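/- arXiv:2010.00967 — 4 statements merged into one kernel-verified Lean document; each statement's English description precedes it below -/
import Mathlib

section
/- For any simple graph G, the trussness satisfies t_G ≤ 3 · max over nonempty edge-induced subgraphs S of G of (T_S / m_S), where T_S and m_S are the number of triangles and edges of S. -/
/-- The support of the edge `{u,v}` in graph `H`. -/
noncomputable def supp {V : Type*} (H : SimpleGraph V) (u v : V) : ℕ :=
  {w | H.Adj u w ∧ H.Adj v w}.ncard

/-- The number of triangles of `G`. -/
noncomputable def triCount {V : Type*} (G : SimpleGraph V) : ℕ :=
  {t : Finset V | G.IsNClique 3 t}.ncard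

/-- The trussness of `G`. -/
noncomputable def trussness {V : Type*} (G : SimpleGraph V) : ℕ :=
  sSup {k | ∃ H : SimpleGraph V, H ≤ G ∧ H ≠ ⊥ ∧ ∀ u v, H.Adj u v → k ≤ supp H u v}

/-!
Count the incidences between edges and triangles of a subgraph `H` in which every edge has
support at least `k`: each edge lies in at least `k` triangles and each triangle has three edges,
so `k * m_H ≤ 3 * T_H`. Supports are bounded by `|V|`, so the trussness of `G` is attained by such
an `H ≤ G`, and `T_H / m_H` is one of the densities in the supremum.
-/

section

open Finset SimpleGraph

variable {V : Type*}

section Counting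

variable [Fintype V] (H : SimpleGraph V) [DecidableRel H.Adj]

lemma triCount_eq_card_cliqueFinset [DecidableEq V] : triCount H = #(H.cliqueFinset 3) := by
  rw [triCount, ← Set.ncard_coe_finset, coe_cliqueFinset]
  rfl

lemma ncard_edgeSet_eq_card_edgeFinset : H.edgeSet.ncard = #H.edgeFinset := by
  rw [← coe_edgeFinset, Set.ncard_coe_finset]

lemma supp_eq_card_filter (u v : V) : supp H u v = #{w | H.Adj u w ∧ H.Adj v w} := by
  rw [supp, ← Set.ncard_coe_finset, coe_filter_univ]

lemma supp_le_card_cliqueFinset_filter_mem_sym2 [DecidableEq V] {u v : V} (huv : H.Adj u v) :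
    supp H u v ≤ #{t ∈ H.cliqueFinset 3 | s(u, v) ∈ t.sym2} := by
  rw [supp_eq_card_filter]
  refine card_le_card_of_injOn (fun w ↦ {u, v, w}) (fun w hw ↦ ?_) (fun w hw w' hw' hww' ↦ ?_)
  · simp only [coe_filter, Set.mem_ofPred_eq, mem_univ, true_and] at hw
    simp [mem_cliqueFinset_iff, is3Clique_triple_iff, huv, hw.1, hw.2]
  · simp only [coe_filter, Set.mem_ofPred_eq, mem_univ, true_and] at hw hw'
    have hw_mem : w ∈ ({u, v, w'} : Finset V) :=
      (show ({u, v, w} : Finset V) = {u, v, w'} from hww') ▸ by simp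
    simp only [mem_insert, mem_singleton] at hw_mem
    rcases hw_mem with rfl | rfl | rfl
    · exact absurd hw.1 H.irrefl
    · exact absurd hw.2 H.irrefl
    · rfl

lemma card_edgeFinset_filter_mem_sym2_le [DecidableEq V] (t : Finset V) :
    #{e ∈ H.edgeFinset | e ∈ t.sym2} ≤ (#t).choose 2 := by
  rw [← Sym2.card_image_offDiag]
  refine card_le_card fun e he ↦ ?_
  induction e using Sym2.ind with
  | _ a b =>
    simp only [mem_filter, mem_edgeFinset, mem_edgeSet, mk_mem_sym2_iff] at he
    exact mem_image.2 ⟨(a, b), mem_offDiag.2 ⟨he.2.1, he.2.2, he.1.ne⟩, rfl⟩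

theorem card_edgeFinset_mul_le_card_cliqueFinset_mul_three [DecidableEq V] {k : ℕ}
    (hk : ∀ u v, H.Adj u v → k ≤ supp H u v) :
    #H.edgeFinset * k ≤ #(H.cliqueFinset 3) * 3 := by
  refine card_mul_le_card_mul (fun e t ↦ e ∈ t.sym2) (fun e he ↦ ?_) (fun t ht ↦ ?_)
  · induction e using Sym2.ind with
    | _ u v =>
      have huv : H.Adj u v := mem_edgeFinset.1 he
      exact (hk u v huv).trans (supp_le_card_cliqueFinset_filter_mem_sym2 H huv)
  · have ht3 : #t = 3 := (mem_cliqueFinset_iff.1 ht).card_eq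
    exact (card_edgeFinset_filter_mem_sym2_le H t).trans_eq (by rw [ht3]; rfl)

end Counting

lemma natCast_le_three_mul_triCount_div [Fintype V] {H : SimpleGraph V} (hH : H ≠ ⊥) {k : ℕ}
    (hk : ∀ u v, H.Adj u v → k ≤ supp H u v) :
    (k : ℝ) ≤ 3 * (triCount H / H.edgeSet.ncard) := by
  classical
  have hm : (0 : ℝ) < H.edgeSet.ncard := by
    exact_mod_cast (Set.ncard_pos H.edgeSet.toFinite).2 (edgeSet_nonempty.2 hH)
  rw [mul_div_assoc', le_div_iff₀ hm, ncard_edgeSet_eq_card_edgeFinset,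
    triCount_eq_card_cliqueFinset, mul_comm, mul_comm 3]
  exact_mod_cast
    card_edgeFinset_mul_le_card_cliqueFinset_mul_three H hk

lemma exists_le_supp_of_trussness_pos [Finite V] {G : SimpleGraph V} (h : 0 < trussness G) :
    ∃ H ≤ G, H ≠ ⊥ ∧ ∀ u v, H.Adj u v → trussness G ≤ supp H u v := by
  refine Nat.sSup_mem (s := {k | ∃ H ≤ G, H ≠ ⊥ ∧ ∀ u v, H.Adj u v → k ≤ supp H u v})
    (Set.nonempty_iff_ne_empty.2 fun hK ↦ ?_) ⟨Nat.card V, ?_⟩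
  · rw [trussness, hK, csSup_empty] at h
    exact h.false
  · rintro k ⟨H, -, hH, hk⟩
    obtain ⟨u, v, huv⟩ := ne_bot_iff_exists_adj.1 hH
    exact (hk u v huv).trans (Set.ncard_le_card _)

lemma bddAbove_triCount_div [Finite V] (G : SimpleGraph V) :
    BddAbove {x : ℝ | ∃ S : SimpleGraph V, S ≤ G ∧
      S.edgeSet.Nonempty ∧ x = (triCount S : ℝ) / (S.edgeSet.ncard : ℝ)} := by
  refine ⟨Nat.card (Finset V), ?_⟩
  rintro _ ⟨S, -, hS, rfl⟩
  have hm : (1 : ℝ) ≤ S.edgeSet.ncard := by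
    exact_mod_cast (Set.ncard_pos S.edgeSet.toFinite).2 hS
  calc (triCount S : ℝ) / S.edgeSet.ncard ≤ triCount S := div_le_self (by positivity) hm
    _ ≤ Nat.card (Finset V) := by exact_mod_cast Set.ncard_le_card _

end

theorem trussness_le_three_mul_max_density_general {V : Type*} [Fintype V]
    (G : SimpleGraph V) :
    (trussness G : ℝ) ≤ 3 * sSup {x : ℝ | ∃ S : SimpleGraph V, S ≤ G ∧
      S.edgeSet.Nonempty ∧ x = (triCount S : ℝ) / (S.edgeSet.ncard : ℝ)} := by
  obtain h0 | hpos := (trussness G).eq_zero_or_pos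
  · rw [h0, Nat.cast_zero]
    refine mul_nonneg zero_le_three (Real.sSup_nonneg ?_)
    rintro _ ⟨S, -, -, rfl⟩
    positivity
  obtain ⟨H, hHG, hH, hk⟩ := exists_le_supp_of_trussness_pos hpos
  calc (trussness G : ℝ) ≤ 3 * (triCount H / H.edgeSet.ncard) :=
        natCast_le_three_mul_triCount_div hH hk
    _ ≤ _ := by
      gcongr
      exact le_csSup (bddAbove_triCount_div G)
        ⟨H, hHG, SimpleGraph.edgeSet_nonempty.2 hH, rfl⟩

/-- The trussness is at most three times the maximum triangle density
`T_S / m_S` over nonempty edge-induced subgraphs `S` of `G`. -/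
theorem trussness_le_three_mul_max_density {V : Type*} [Fintype V]
    (G : SimpleGraph V) (h : G.edgeSet.Nonempty) :
    (trussness G : ℝ) ≤ 3 * sSup {x : ℝ | ∃ S : SimpleGraph V, S ≤ G ∧
      S.edgeSet.Nonempty ∧ x = (triCount S : ℝ) / (S.edgeSet.ncard : ℝ)} :=
  trussness_le_three_mul_max_density_general G
end

section
/- Let G be a simple graph with trussness t_G and q ≥ 1 an integer. Then the trussness of the balanced blow-up G^{×q} equals q·t_G. -/
/-- The balanced blow-up of `G`. -/
def blowup {V : Type*} (G : SimpleGraph V) (q : ℕ) : SimpleGraph (V × Fin q) where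
  Adj x y := G.Adj x.1 y.1
  symm := ⟨fun _ _ h => h.symm⟩
  loopless := ⟨fun x h => G.loopless.irrefl x.1 h⟩

section

variable {V : Type*}

def IsTruss (H : SimpleGraph V) (k : ℕ) : Prop :=
  H ≠ ⊥ ∧ ∀ ⦃u v⦄, H.Adj u v → k ≤ supp H u v

def proj {q : ℕ} (H : SimpleGraph (V × Fin q)) : SimpleGraph V :=
  SimpleGraph.fromRel fun u v => ∃ i j, H.Adj (u, i) (v, j)

section supp

variable [Finite V]

lemma supp_mono {H H' : SimpleGraph V} (h : H ≤ H') (u v : V) : supp H u v ≤ supp H' u v :=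
  Set.ncard_le_ncard (fun _ hw => ⟨h hw.1, h hw.2⟩)

lemma supp_le_card (H : SimpleGraph V) (u v : V) : supp H u v ≤ Nat.card V :=
  (Set.ncard_le_ncard (Set.subset_univ _)).trans_eq (Set.ncard_univ V)

end supp

lemma supp_blowup (H : SimpleGraph V) (q : ℕ) (x y : V × Fin q) :
    supp (blowup H q) x y = q * supp H x.1 y.1 := by
  have : {w | (blowup H q).Adj x w ∧ (blowup H q).Adj y w} =
      {w | H.Adj x.1 w ∧ H.Adj y.1 w} ×ˢ (Set.univ : Set (Fin q)) := by
    ext w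
    simp [blowup]
  rw [supp, supp, this, Set.ncard_prod, Set.ncard_univ, Nat.card_fin, mul_comm]

lemma blowup_mono {H G : SimpleGraph V} (h : H ≤ G) (q : ℕ) : blowup H q ≤ blowup G q :=
  fun _ _ hxy => h hxy

section proj

variable {q : ℕ} {G : SimpleGraph V} {H : SimpleGraph (V × Fin q)}

lemma proj_le (hH : H ≤ blowup G q) : proj H ≤ G := by
  rintro u v ⟨-, ⟨i, j, huv⟩ | ⟨i, j, hvu⟩⟩
  exacts [hH huv, (hH hvu).symm]

lemma le_blowup_proj (hH : H ≤ blowup G q) : H ≤ blowup (proj H) q :=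
  fun x y hxy =>
    show (proj H).Adj x.1 y.1 from ⟨(show G.Adj x.1 y.1 from hH hxy).ne, .inl ⟨x.2, y.2, hxy⟩⟩

end proj

namespace IsTruss

variable {H : SimpleGraph V} {k : ℕ}

lemma le_card [Finite V] (hH : IsTruss H k) : k ≤ Nat.card V := by
  obtain ⟨u, v, huv⟩ := SimpleGraph.ne_bot_iff_exists_adj.1 hH.1
  exact (hH.2 huv).trans (supp_le_card H u v)

lemma blowup (hH : IsTruss H k) {q : ℕ} (hq : 0 < q) : IsTruss (blowup H q) (q * k) := by
  refine ⟨fun hbot => ?_, fun x y hxy => ?_⟩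
  · obtain ⟨u, v, huv⟩ := SimpleGraph.ne_bot_iff_exists_adj.1 hH.1
    have : (_root_.blowup H q).Adj (u, ⟨0, hq⟩) (v, ⟨0, hq⟩) := huv
    simp [hbot] at this
  · rw [supp_blowup]
    exact Nat.mul_le_mul_left q (hH.2 hxy)

lemma proj [Finite V] {q : ℕ} {G : SimpleGraph V} {H : SimpleGraph (V × Fin q)}
    (hHG : H ≤ _root_.blowup G q) (hH : IsTruss H k) : IsTruss (_root_.proj H) (k ⌈/⌉ q) := by
  have hHP := le_blowup_proj hHG
  refine ⟨?_, fun u v huv => ?_⟩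
  · obtain ⟨x, y, hxy⟩ := SimpleGraph.ne_bot_iff_exists_adj.1 hH.1
    exact SimpleGraph.ne_bot_iff_exists_adj.2 ⟨x.1, y.1, hHP hxy⟩
  obtain ⟨i, j, h⟩ : ∃ i j, H.Adj (u, i) (v, j) := by
    obtain ⟨-, ⟨i, j, h⟩ | ⟨i, j, h⟩⟩ := huv
    exacts [⟨i, j, h⟩, ⟨j, i, h.symm⟩]
  rw [ceilDiv_le_iff_le_mul i.pos]
  calc k ≤ supp H (u, i) (v, j) := hH.2 h
    _ ≤ supp (_root_.blowup (_root_.proj H) q) (u, i) (v, j) := supp_mono hHP _ _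
    _ = q * supp (_root_.proj H) u v := supp_blowup _ _ _ _

end IsTruss

section trussness

variable {G : SimpleGraph V}

lemma trussness_eq : trussness G = sSup {k | ∃ H ≤ G, IsTruss H k} := rfl

lemma trussness_le {n : ℕ} (h : ∀ H ≤ G, ∀ k, IsTruss H k → k ≤ n) : trussness G ≤ n :=
  csSup_le' fun _ ⟨H, hHG, hH⟩ => h H hHG _ hH

variable [Finite V]

lemma bddAbove_trussSet : BddAbove {k | ∃ H ≤ G, IsTruss H k} :=
  ⟨Nat.card V, fun _ ⟨_, _, hH⟩ => hH.le_card⟩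

lemma IsTruss.le_trussness {H : SimpleGraph V} {k : ℕ} (hHG : H ≤ G) (hH : IsTruss H k) :
    k ≤ trussness G :=
  le_csSup bddAbove_trussSet ⟨H, hHG, hH⟩

lemma exists_isTruss_trussness (h : 0 < trussness G) : ∃ H ≤ G, IsTruss H (trussness G) := by
  refine Nat.sSup_mem (Set.nonempty_iff_ne_empty.2 fun hS => ?_) bddAbove_trussSet
  simp [trussness_eq, hS] at h

end trussness

end

theorem blowup_trussness_general {V : Type*} [Fintype V]
    (G : SimpleGraph V) (q : ℕ) :
    trussness (blowup G q) = q * trussness G := by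
  refine le_antisymm (trussness_le fun H hH k hk => ?_) ?_
  · obtain ⟨x, -, -⟩ := SimpleGraph.ne_bot_iff_exists_adj.1 hk.1
    exact (ceilDiv_le_iff_le_mul x.2.pos).1 ((hk.proj hH).le_trussness (proj_le hH))
  rcases (trussness G).eq_zero_or_pos with h | h
  · simp [h]
  rcases q.eq_zero_or_pos with rfl | hq
  · simp
  obtain ⟨H, hHG, hH⟩ := exists_isTruss_trussness h
  exact (hH.blowup hq).le_trussness (blowup_mono hHG q)

/-- The trussness of the balanced blow-up `G^{×q}` equals `q` times the trussness of `G`. -/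
theorem blowup_trussness {V : Type*} [Fintype V] [DecidableEq V]
    (G : SimpleGraph V) (q : ℕ) (hq : 1 ≤ q) :
    trussness (blowup G q) = q * trussness G :=
  blowup_trussness_general G q
end

section
/- Let G be a simple graph with m ≥ 1 edges, T_G triangles, and trussness t_G, and let x ≥ 0 be an integer. Let G(x) be the disjoint union of G with ℓ = ⌈m / C(x+2,2)⌉ disjoint copies of the complete graph K_{x+2}. Let T' and m' denote the number of triangles and edges of G(x). Then T'/m' ≤ t_G/2 + x/3. -/
/-- `G(x)`: the disjoint union of `G` with `ℓ` disjoint copies of the complete graph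
`K_{x+2}` (the "spurious cliques"). -/
def addCliques {V : Type*} (G : SimpleGraph V) (x ℓ : ℕ) :
    SimpleGraph (V ⊕ (Fin ℓ × Fin (x + 2))) where
  Adj a b := (∃ u v, a = Sum.inl u ∧ b = Sum.inl v ∧ G.Adj u v) ∨
    (∃ i u v, a = Sum.inr (i, u) ∧ b = Sum.inr (i, v) ∧ u ≠ v)
  symm := ⟨fun a b h => by
    rcases h with ⟨u, v, h1, h2, h3⟩ | ⟨i, u, v, h1, h2, h3⟩
    · exact Or.inl ⟨v, u, h2, h1, h3.symm⟩
    · exact Or.inr ⟨i, v, u, h2, h1, h3.symm⟩⟩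
  loopless := ⟨fun a h => by
    rcases h with ⟨u, v, h1, h2, h3⟩ | ⟨i, u, v, h1, h2, h3⟩ <;> simp_all⟩

/-!
Peeling argument: every nonempty subgraph of `G` has an edge whose support is at most `t_G`
(otherwise that subgraph would witness a larger trussness), and deleting it destroys at most
`t_G` triangles; hence `T_G ≤ t_G · m`. The `ℓ` cliques add `ℓ·C(x+2,2) ≥ m` edges and
`ℓ·C(x+2,3) = (x/3)·ℓ·C(x+2,2)` triangles, so `m' ≥ 2m` and
`T' ≤ t_G·m + (x/3)·ℓ·C(x+2,2) ≤ (t_G/2 + x/3)·m'`.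
-/

open SimpleGraph

section Trussness

variable {V : Type*} [Finite V] {G H : SimpleGraph V}

lemma le_trussness {k : ℕ} (hH : H ≤ G) (hne : H ≠ ⊥)
    (hk : ∀ u v, H.Adj u v → k ≤ supp H u v) : k ≤ trussness G := by
  refine le_csSup ⟨Nat.card V, ?_⟩ ⟨H, hH, hne, hk⟩
  rintro k ⟨H', -, hne', hk'⟩
  obtain ⟨e, he⟩ := edgeSet_nonempty.2 hne'
  induction e using Sym2.inductionOn with
  | _ u v => exact (hk' u v he).trans (Set.ncard_le_card _)

lemma exists_adj_supp_le_trussness (hH : H ≤ G) (hne : H ≠ ⊥) :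
    ∃ u v, H.Adj u v ∧ supp H u v ≤ trussness G := by
  by_contra! h
  exact (le_trussness hH hne h).not_gt (Nat.lt_succ_self _)

lemma triCount_le_triCount_deleteEdges_add_supp {u v : V} (huv : H.Adj u v) :
    triCount H ≤ triCount (H.deleteEdges {s(u, v)}) + supp H u v := by
  classical
  have hsub : H.cliqueSet 3 ⊆ (H.deleteEdges {s(u, v)}).cliqueSet 3 ∪
      (fun w ↦ {u, v, w}) '' {w | H.Adj u w ∧ H.Adj v w} := by
    intro t ht
    by_cases huvt : u ∈ t ∧ v ∈ t
    · obtain ⟨w, hwt, hw⟩ : ∃ w ∈ t, w ∉ ({u, v} : Finset V) :=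
        Finset.exists_mem_notMem_of_card_lt_card <|
          Finset.card_le_two.trans_lt (by rw [ht.card_eq]; omega)
      rw [Finset.mem_insert, Finset.mem_singleton, not_or] at hw
      have huw : H.Adj u w := ht.isClique huvt.1 hwt (Ne.symm hw.1)
      have hvw : H.Adj v w := ht.isClique huvt.2 hwt (Ne.symm hw.2)
      refine Or.inr ⟨w, ⟨huw, hvw⟩, Finset.eq_of_subset_of_card_le ?_ ?_⟩
      · simp [Finset.insert_subset_iff, huvt, hwt]
      · rw [ht.card_eq, (is3Clique_triple_iff.2 ⟨huv, huw, hvw⟩).card_eq]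
    · refine Or.inl ⟨fun a ha b hb hab ↦
        deleteEdges_adj.2 ⟨ht.isClique ha hb hab, fun hab' ↦ ?_⟩, ht.card_eq⟩
      rw [Set.mem_singleton_iff, Sym2.eq_iff] at hab'
      rcases hab' with ⟨rfl, rfl⟩ | ⟨rfl, rfl⟩
      exacts [huvt ⟨ha, hb⟩, huvt ⟨hb, ha⟩]
  calc triCount H ≤ ((H.deleteEdges {s(u, v)}).cliqueSet 3 ∪
        (fun w ↦ {u, v, w}) '' {w | H.Adj u w ∧ H.Adj v w}).ncard :=
        Set.ncard_le_ncard hsub (Set.toFinite _)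
    _ ≤ triCount (H.deleteEdges {s(u, v)}) + supp H u v :=
        (Set.ncard_union_le _ _).trans <|
          Nat.add_le_add_left (Set.ncard_image_le (Set.toFinite _)) _

lemma triCount_le_trussness_mul (hH : H ≤ G) :
    triCount H ≤ trussness G * H.edgeSet.ncard := by
  induction hm : H.edgeSet.ncard using Nat.strong_induction_on generalizing H with
  | _ m ih =>
    obtain rfl | hne := eq_or_ne H ⊥
    · simp [triCount, isNClique_bot_iff]
    obtain ⟨u, v, huv, hsupp⟩ := exists_adj_supp_le_trussness hH hne
    have hdel : (H.deleteEdges {s(u, v)}).edgeSet.ncard = m - 1 := by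
      rw [edgeSet_deleteEdges, Set.ncard_sdiff_singleton_of_mem (H.mem_edgeSet.2 huv), hm]
    have hm0 : 0 < m := hm ▸ (Set.ncard_pos (Set.toFinite _)).2 ⟨_, H.mem_edgeSet.2 huv⟩
    calc triCount H ≤ triCount (H.deleteEdges {s(u, v)}) + supp H u v :=
          triCount_le_triCount_deleteEdges_add_supp huv
      _ ≤ trussness G * (m - 1) + trussness G :=
          add_le_add (ih _ (by omega) ((deleteEdges_le _).trans hH) hdel) hsupp
      _ = trussness G * m := by rw [← Nat.mul_add_one, Nat.sub_add_cancel hm0]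

end Trussness

namespace SimpleGraph

variable {V W ι α : Type*}

lemma ncard_edgeSet_sum [Finite V] [Finite W] (G : SimpleGraph V) (H : SimpleGraph W) :
    (G ⊕g H).edgeSet.ncard = G.edgeSet.ncard + H.edgeSet.ncard := by
  simp only [← Nat.card_coe_set_eq]
  rw [Nat.card_congr edgeSetSumEquiv, Nat.card_sum]

lemma cliqueSet_sum_subset (G : SimpleGraph V) (H : SimpleGraph W) (n : ℕ) :
    (G ⊕g H).cliqueSet n ⊆
      (·.map .inl) '' G.cliqueSet n ∪ (·.map .inr) '' H.cliqueSet n := by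
  intro s hs
  have hside : s.toLeft = ∅ ∨ s.toRight = ∅ := by
    by_contra! h
    obtain ⟨⟨a, ha⟩, b, hb⟩ := h
    exact not_adj_sum_inl_inr a b <|
      hs.isClique (Finset.mem_toLeft.1 ha) (Finset.mem_toRight.1 hb) Sum.inl_ne_inr
  rcases hside with h | h
  · have hs' : s.toRight.map .inr = s := by
      conv_rhs => rw [← Finset.toLeft_disjSum_toRight (u := s), h, Finset.empty_disjSum]
    refine Or.inr ⟨s.toRight, ⟨fun a ha b hb hab ↦ ?_, ?_⟩, hs'⟩
    · exact sum_adj_inr.1 <| hs.isClique (Finset.mem_toRight.1 ha) (Finset.mem_toRight.1 hb)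
        (Sum.inr_injective.ne hab)
    · rw [← Finset.card_map .inr, hs', hs.card_eq]
  · have hs' : s.toLeft.map .inl = s := by
      conv_rhs => rw [← Finset.toLeft_disjSum_toRight (u := s), h, Finset.disjSum_empty]
    refine Or.inl ⟨s.toLeft, ⟨fun a ha b hb hab ↦ ?_, ?_⟩, hs'⟩
    · exact sum_adj_inl.1 <| hs.isClique (Finset.mem_toLeft.1 ha) (Finset.mem_toLeft.1 hb)
        (Sum.inl_injective.ne hab)
    · rw [← Finset.card_map .inl, hs', hs.card_eq]

lemma ncard_cliqueSet_sum_le [Finite V] [Finite W] (G : SimpleGraph V) (H : SimpleGraph W)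
    (n : ℕ) : ((G ⊕g H).cliqueSet n).ncard ≤ (G.cliqueSet n).ncard + (H.cliqueSet n).ncard :=
  calc ((G ⊕g H).cliqueSet n).ncard
      ≤ ((·.map .inl) '' G.cliqueSet n ∪ (·.map .inr) '' H.cliqueSet n).ncard :=
        Set.ncard_le_ncard (cliqueSet_sum_subset G H n) (Set.toFinite _)
    _ ≤ _ := (Set.ncard_union_le _ _).trans <|
        Nat.add_le_add (Set.ncard_image_le (Set.toFinite _)) (Set.ncard_image_le (Set.toFinite _))

-- `⊥ □ H` is `|ι|` disjoint copies of `H`.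
lemma ncard_edgeSet_bot_boxProd [Fintype ι] [Fintype α] (H : SimpleGraph α) :
    ((⊥ : SimpleGraph ι) □ H).edgeSet.ncard = Fintype.card ι * H.edgeSet.ncard := by
  classical
  have h := ((⊥ : SimpleGraph ι) □ H).sum_degrees_eq_twice_card_edges
  simp only [degree_boxProd, bot_degree, zero_add, Fintype.sum_prod_type, Finset.sum_const,
    Finset.card_univ, smul_eq_mul, H.sum_degrees_eq_twice_card_edges] at h
  rw [← coe_edgeFinset, ← coe_edgeFinset, Set.ncard_coe_finset, Set.ncard_coe_finset]
  linarith

lemma cliqueSet_bot_boxProd_subset (H : SimpleGraph α) {n : ℕ} (hn : n ≠ 0) :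
    ((⊥ : SimpleGraph ι) □ H).cliqueSet n ⊆
      (fun p : ι × Finset α ↦ p.2.map (.sectR p.1 α)) '' (Set.univ ×ˢ H.cliqueSet n) := by
  classical
  intro s hs
  obtain ⟨a, ha⟩ : s.Nonempty := Finset.card_pos.1 (hs.card_eq ▸ Nat.pos_of_ne_zero hn)
  have hadj {p q} (hp : p ∈ s) (hq : q ∈ s) (hpq : p ≠ q) : H.Adj p.2 q.2 ∧ p.1 = q.1 := by
    simpa [boxProd_adj] using hs.isClique hp hq hpq
  have hfib {p} (hp : p ∈ s) : p.1 = a.1 := by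
    obtain rfl | hpa := eq_or_ne p a
    exacts [rfl, (hadj hp ha hpa).2]
  have hs' : (s.image Prod.snd).map (.sectR a.1 α) = s := by
    ext p
    simp only [Finset.mem_map, Finset.mem_image, Function.Embedding.sectR_apply]
    constructor
    · rintro ⟨_, ⟨q, hq, rfl⟩, rfl⟩
      rwa [← hfib hq]
    · exact fun hp ↦ ⟨p.2, ⟨p, hp, rfl⟩, by rw [← hfib hp]⟩
  refine ⟨(a.1, s.image Prod.snd), ⟨trivial, fun b hb c hc hbc ↦ ?_, ?_⟩, hs'⟩
  · obtain ⟨p, hp, rfl⟩ := Finset.mem_image.1 hb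
    obtain ⟨q, hq, rfl⟩ := Finset.mem_image.1 hc
    exact (hadj hp hq (fun h ↦ hbc (h ▸ rfl))).1
  · rw [← Finset.card_map (.sectR a.1 α), hs', hs.card_eq]

lemma ncard_cliqueSet_bot_boxProd_le [Finite ι] [Finite α] (H : SimpleGraph α) {n : ℕ}
    (hn : n ≠ 0) :
    (((⊥ : SimpleGraph ι) □ H).cliqueSet n).ncard ≤ Nat.card ι * (H.cliqueSet n).ncard := by
  rw [← Set.ncard_univ, ← Set.ncard_prod]
  exact (Set.ncard_le_ncard (cliqueSet_bot_boxProd_subset H hn) (Set.toFinite _)).trans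
    (Set.ncard_image_le (Set.toFinite _))

lemma ncard_cliqueSet_top [Fintype α] (n : ℕ) :
    ((⊤ : SimpleGraph α).cliqueSet n).ncard = (Fintype.card α).choose n := by
  have : (⊤ : SimpleGraph α).cliqueSet n = ↑((Finset.univ : Finset α).powersetCard n) := by
    ext s
    simp [isNClique_iff, IsClique.top]
  rw [this, Set.ncard_coe_finset, Finset.card_powersetCard, Finset.card_univ]

end SimpleGraph

lemma addCliques_eq_sum {V : Type*} (G : SimpleGraph V) (x ℓ : ℕ) :
    addCliques G x ℓ =
      G ⊕g ((⊥ : SimpleGraph (Fin ℓ)) □ (⊤ : SimpleGraph (Fin (x + 2)))) := by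
  ext (u | ⟨i, a⟩) (v | ⟨j, b⟩) <;> simp [addCliques, boxProd_adj, eq_comm, and_comm]

section AddCliques

variable {V : Type*} [Finite V] (G : SimpleGraph V) (x ℓ : ℕ)

lemma ncard_edgeSet_addCliques :
    (addCliques G x ℓ).edgeSet.ncard = G.edgeSet.ncard + ℓ * (x + 2).choose 2 := by
  rw [addCliques_eq_sum, ncard_edgeSet_sum, ncard_edgeSet_bot_boxProd,
    ← coe_edgeFinset (⊤ : SimpleGraph (Fin (x + 2))), Set.ncard_coe_finset,
    card_edgeFinset_top_eq_card_choose_two, Fintype.card_fin, Fintype.card_fin]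

lemma triCount_addCliques_le :
    triCount (addCliques G x ℓ) ≤ triCount G + ℓ * (x + 2).choose 3 := by
  have hK := ncard_cliqueSet_bot_boxProd_le (ι := Fin ℓ) (⊤ : SimpleGraph (Fin (x + 2)))
    three_ne_zero
  rw [ncard_cliqueSet_top, Nat.card_fin, Fintype.card_fin] at hK
  rw [addCliques_eq_sum]
  exact (ncard_cliqueSet_sum_le _ _ 3).trans (Nat.add_le_add_left hK _)

end AddCliques

lemma three_mul_choose_three (x : ℕ) : 3 * (x + 2).choose 3 = x * (x + 2).choose 2 := by
  rw [mul_comm, Nat.choose_succ_right_eq, Nat.add_sub_cancel, mul_comm]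

lemma le_ceil_div_mul {K : Type*} [Field K] [LinearOrder K] [IsStrictOrderedRing K]
    [FloorSemiring K] (m : ℕ) {c : ℕ} (hc : 0 < c) : m ≤ ⌈(m : K) / c⌉₊ * c := by
  have h := Nat.le_ceil ((m : K) / c)
  rw [div_le_iff₀ (by exact_mod_cast hc)] at h
  exact_mod_cast h

theorem addCliques_density_le_general {V : Type*} [Fintype V]
    (G : SimpleGraph V) (x ℓ : ℕ)
    (hℓ : ℓ = ⌈(G.edgeSet.ncard : ℚ) / ((x + 2).choose 2 : ℚ)⌉₊) :
    (triCount (addCliques G x ℓ) : ℝ) / ((addCliques G x ℓ).edgeSet.ncard : ℝ) ≤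
      (trussness G : ℝ) / 2 + (x : ℝ) / 3 := by
  have hm : G.edgeSet.ncard ≤ ℓ * (x + 2).choose 2 :=
    hℓ ▸ le_ceil_div_mul _ (Nat.choose_pos (by omega))
  have hT : triCount (addCliques G x ℓ) ≤
      trussness G * G.edgeSet.ncard + ℓ * (x + 2).choose 3 :=
    (triCount_addCliques_le G x ℓ).trans <|
      Nat.add_le_add_right (triCount_le_trussness_mul le_rfl) _
  have hchoose := three_mul_choose_three x
  rw [ncard_edgeSet_addCliques]
  refine div_le_of_le_mul₀ (by positivity) (by positivity) ?_
  rify at hm hT hchoose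
  push_cast
  linarith [mul_le_mul_of_nonneg_left hm (Nat.cast_nonneg (trussness G)),
    congrArg ((ℓ : ℝ) * ·) hchoose, (by positivity : (0 : ℝ) ≤ x * G.edgeSet.ncard)]

/-- With `ℓ = ⌈m / C(x+2,2)⌉`, the triangle density of `G(x)` is at most
`t_G/2 + x/3`. -/
theorem addCliques_density_le {V : Type*} [Fintype V]
    (G : SimpleGraph V) (x ℓ : ℕ) (hm : 1 ≤ G.edgeSet.ncard)
    (hℓ : ℓ = ⌈(G.edgeSet.ncard : ℚ) / ((x + 2).choose 2 : ℚ)⌉₊) :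
    (triCount (addCliques G x ℓ) : ℝ) / ((addCliques G x ℓ).edgeSet.ncard : ℝ) ≤
      (trussness G : ℝ) / 2 + (x : ℝ) / 3 :=
  addCliques_density_le_general G x ℓ hℓ
end

section
/- For a simple graph G, the degeneracy of the triangle hypergraph G^△ equals the trussness of G: d_{G^△} = t_G. -/
/-- The hyperedges of the triangle hypergraph `G^△`. -/
def triHyperedges {V : Type*} [DecidableEq V] (G : SimpleGraph V) : Set (Finset (Sym2 V)) :=
  {E | ∃ a b c : V, G.Adj a b ∧ G.Adj b c ∧ G.Adj a c ∧
    E = {s(a, b), s(b, c), s(a, c)}}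

/-- The degeneracy of the triangle hypergraph `G^△`: the largest `d` such that some
nonempty set `U` of vertices of `G^△` (i.e., edges of `G`) induces a subhypergraph
(keeping the hyperedges entirely inside `U`) of minimum degree at least `d`. -/
noncomputable def triHypergraphDegeneracy {V : Type*} [DecidableEq V]
    (G : SimpleGraph V) : ℕ :=
  sSup {d | ∃ U : Set (Sym2 V), U ⊆ G.edgeSet ∧ U.Nonempty ∧
    ∀ e ∈ U, d ≤ {E | E ∈ triHyperedges G ∧ (E : Set (Sym2 V)) ⊆ U ∧ e ∈ E}.ncard}


set_option maxHeartbeats 1000000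
private lemma key_image {V : Type*} [DecidableEq V] {G H : SimpleGraph V} (hHG : H ≤ G)
    {u v : V} (huv : H.Adj u v) :
    {E | E ∈ triHyperedges G ∧ (E : Set (Sym2 V)) ⊆ H.edgeSet ∧ s(u,v) ∈ E} =
      (fun w => ({s(u,w), s(v,w), s(u,v)} : Finset (Sym2 V))) ''
        {w | H.Adj u w ∧ H.Adj v w} := by
  ext E
  constructor
  · rintro ⟨⟨a,b,c,hab,hbc,hac,rfl⟩, hsub, he⟩
    have Hab : H.Adj a b := hsub (show s(a,b) ∈ (({s(a,b), s(b,c), s(a,c)} : Finset (Sym2 V)) : Set (Sym2 V)) by simp)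
    have Hbc : H.Adj b c := hsub (show s(b,c) ∈ (({s(a,b), s(b,c), s(a,c)} : Finset (Sym2 V)) : Set (Sym2 V)) by simp)
    have Hac : H.Adj a c := hsub (show s(a,c) ∈ (({s(a,b), s(b,c), s(a,c)} : Finset (Sym2 V)) : Set (Sym2 V)) by simp)
    simp only [Finset.mem_insert, Finset.mem_singleton] at he
    rcases he with h | h | h
    · rw [Sym2.eq_iff] at h
      rcases h with ⟨rfl,rfl⟩|⟨rfl,rfl⟩
      · exact ⟨c, ⟨Hac, Hbc⟩, by ext x; induction x using Sym2.ind with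
          | _ p q => simp [Sym2.eq_iff]; tauto⟩
      · exact ⟨c, ⟨Hbc, Hac⟩, by ext x; induction x using Sym2.ind with
          | _ p q => simp [Sym2.eq_iff]; tauto⟩
    · rw [Sym2.eq_iff] at h
      rcases h with ⟨rfl,rfl⟩|⟨rfl,rfl⟩
      · exact ⟨a, ⟨Hab.symm, Hac.symm⟩, by ext x; induction x using Sym2.ind with
          | _ p q => simp [Sym2.eq_iff]; tauto⟩
      · exact ⟨a, ⟨Hac.symm, Hab.symm⟩, by ext x; induction x using Sym2.ind with
          | _ p q => simp [Sym2.eq_iff]; tauto⟩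
    · rw [Sym2.eq_iff] at h
      rcases h with ⟨rfl,rfl⟩|⟨rfl,rfl⟩
      · exact ⟨b, ⟨Hab, Hbc.symm⟩, by ext x; induction x using Sym2.ind with
          | _ p q => simp [Sym2.eq_iff]; tauto⟩
      · exact ⟨b, ⟨Hbc.symm, Hab⟩, by ext x; induction x using Sym2.ind with
          | _ p q => simp [Sym2.eq_iff]; tauto⟩
  · rintro ⟨w, ⟨hw1, hw2⟩, rfl⟩
    refine ⟨⟨u, w, v, hHG hw1, (hHG hw2).symm, hHG huv, ?_⟩, ?_, by simp⟩
    · ext x; induction x using Sym2.ind with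
        | _ p q => simp [Sym2.eq_iff]; tauto
    · intro x hx
      simp only [Finset.coe_insert, Set.mem_insert_iff, Finset.coe_singleton,
        Set.mem_singleton_iff] at hx
      rcases hx with rfl | rfl | rfl
      · exact hw1
      · exact hw2
      · exact huv

private lemma key_inj {V : Type*} [DecidableEq V] (H : SimpleGraph V)
    {u v : V} (huv : H.Adj u v) :
    Set.InjOn (fun w => ({s(u,w), s(v,w), s(u,v)} : Finset (Sym2 V)))
      {w | H.Adj u w ∧ H.Adj v w} := by
  rintro w ⟨hw1, hw2⟩ w' ⟨hw1', hw2'⟩ h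
  dsimp only at h
  have hm : s(u,w) ∈ ({s(u,w'), s(v,w'), s(u,v)} : Finset (Sym2 V)) := by
    rw [← h]; simp
  have h1 := hw1.ne
  have h2 := hw2.ne
  have h3 := huv.ne
  simp only [Finset.mem_insert, Finset.mem_singleton, Sym2.eq_iff] at hm
  tauto

private lemma key_ncard {V : Type*} [DecidableEq V] {G H : SimpleGraph V} (hHG : H ≤ G)
    {u v : V} (huv : H.Adj u v) :
    {E | E ∈ triHyperedges G ∧ (E : Set (Sym2 V)) ⊆ H.edgeSet ∧ s(u,v) ∈ E}.ncard
      = supp H u v := by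
  rw [key_image hHG huv, Set.ncard_image_of_injOn (key_inj H huv)]; rfl

/-- The degeneracy of the triangle hypergraph equals the trussness of the graph. -/
theorem triHypergraphDegeneracy_eq_trussness {V : Type*} [Fintype V] [DecidableEq V]
    (G : SimpleGraph V) :
    triHypergraphDegeneracy G = trussness G := by
  unfold triHypergraphDegeneracy trussness
  congr 1
  ext d
  simp only [Set.mem_setOf_eq]
  constructor
  · rintro ⟨U, hUG, hUne, hdeg⟩
    have hE : (SimpleGraph.fromEdgeSet U).edgeSet = U := by
      rw [SimpleGraph.edgeSet_fromEdgeSet]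
      ext e
      simp only [Set.mem_diff, Set.mem_setOf_eq, and_iff_left_iff_imp]
      intro he
      exact G.not_isDiag_of_mem_edgeSet (hUG he)
    have hle : SimpleGraph.fromEdgeSet U ≤ G := by
      intro a b hab
      rw [SimpleGraph.fromEdgeSet_adj] at hab
      exact (SimpleGraph.mem_edgeSet G).mp (hUG hab.1)
    refine ⟨SimpleGraph.fromEdgeSet U, hle, ?_, ?_⟩
    · intro hb
      rw [hb, SimpleGraph.edgeSet_bot] at hE
      exact hUne.ne_empty hE.symm
    · intro a b hab
      have hmem : s(a, b) ∈ U := hE ▸ ((SimpleGraph.mem_edgeSet _).mpr hab)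
      have := hdeg _ hmem
      rwa [← hE, key_ncard hle hab] at this
  · rintro ⟨H, hHG, hHne, hsupp⟩
    refine ⟨H.edgeSet, SimpleGraph.edgeSet_mono hHG, ?_, ?_⟩
    · rwa [SimpleGraph.edgeSet_nonempty]
    · intro e he
      induction e using Sym2.ind with
      | _ a b =>
        have hab : H.Adj a b := (SimpleGraph.mem_edgeSet _).mp he
        rw [key_ncard hHG hab]
        exact hsupp a b hab
end
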